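/- arXiv:1308.5809 — 2 statements merged into one kernel-verified Lean document; each statement's English description precedes it below -/
import Mathlib

section
/- Lemma 7, first part (IASB10 is tighter than IASB5, hence than IASB4, IASB1 and CA-DSB): In the per-user per-tone spectrum optimization setup, let q, t ∈ I be two distinct reference users. Then for all s ∈ [0, M]: f(s) ≤ f^IASB10(s) ≤ f^IASB5(s). -/
/-!
With `x_m(s) = s̃_m / int_m(s)`, each crosstalk term `w_m log (1 + x_m(s))` is bounded below by
`w_m α_m log x_m(s) + c_m`: this is `w_m` times the tangent of the convex function
`u ↦ log (1 + eᵘ)` at `u = log x̃_m`, so the two agree to first order at `s̃`. Hence `f − f1_IASB10`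
is nonpositive with value and slope zero at `s̃`, which gives `f ≤ f^IASB10`. The two
approximations differ by `E − LIN E`, where `E = f1_IASB5 − f1_IASB10` is the sum of the terms
`w_m α_m log (s̃_m / int_m(s)) + c_m` over `m ∉ {q, t}`; `E` is convex because `−log` of an affine
function is, so `E − LIN E ≥ 0`.
-/

open Real Finset

/-- The approximation `f^X = f1_X + LIN(f − f1_X)` at the approximation point `a`. -/
noncomputable def approx (f f1 : ℝ → ℝ) (a s : ℝ) : ℝ :=
  f1 s + (f a - f1 a) + deriv (fun x => f x - f1 x) a * (s - a)

section approx

variable {f f1 f2 : ℝ → ℝ} {a s d e : ℝ}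

theorem le_approx (h : HasDerivAt (fun x => f x - f1 x) d a)
    (hs : f s - f1 s ≤ f a - f1 a + d * (s - a)) : f s ≤ approx f f1 a s := by
  rw [approx, h.deriv]
  linarith

theorem approx_le_approx (hf2 : HasDerivAt (fun x => f x - f2 x) d a)
    (hE : HasDerivAt (fun x => f1 x - f2 x) e a)
    (htan : f1 a - f2 a + e * (s - a) ≤ f1 s - f2 s) :
    approx f f2 a s ≤ approx f f1 a s := by
  have hf1 : HasDerivAt (fun x => f x - f1 x) (d - e) a :=
    (hf2.fun_sub hE).congr_of_eventuallyEq (.of_forall fun x => by ring)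
  rw [approx, approx, hf1.deriv, hf2.deriv]
  linarith

end approx

theorem mul_log_add_le_log_one_add {x y : ℝ} (hx : 0 < x) (hy : 0 < y) :
    y / (1 + y) * log x + (log (1 + y) - y / (1 + y) * log y) ≤ log (1 + x) := by
  set α := y / (1 + y)
  have hα0 : 0 ≤ α := by positivity
  have hα1 : α ≤ 1 := div_le_one_of_le₀ (by linarith) (by positivity)
  -- `(1 + x) / (1 + y)` is the `α`-weighted mean of `1` and `x / y`
  have hmean : (1 - α) • (1 : ℝ) + α • (x / y) = (1 + x) / (1 + y) := by
    simp only [α, smul_eq_mul]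
    field_simp
    ring
  have hconc := strictConcaveOn_log_Ioi.concaveOn.2 (Set.mem_Ioi.2 one_pos)
    (Set.mem_Ioi.2 (div_pos hx hy)) (by linarith : 0 ≤ 1 - α) hα0 (by ring : 1 - α + α = 1)
  rw [hmean, smul_eq_mul, smul_eq_mul, log_one, mul_zero, zero_add,
    log_div hx.ne' hy.ne', log_div (by positivity) (by positivity)] at hconc
  linarith

theorem hasDerivAt_log_div_affine {σ a z x : ℝ} (hσ : σ ≠ 0) (hL : a * x + z ≠ 0) :
    HasDerivAt (fun y => log (σ / (a * y + z))) (-a / (a * x + z)) x := by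
  have hden : HasDerivAt (fun y => a * y + z) a x := by
    simpa using ((hasDerivAt_id x).const_mul a).add_const z
  convert ((hasDerivAt_const x σ).fun_div hden hL).log (div_ne_zero hσ hL) using 1
  field_simp
  ring

theorem hasDerivAt_log_one_add_div_affine {σ a z x : ℝ} (hσ : 0 < σ) (hL : 0 < a * x + z) :
    HasDerivAt (fun y => log (1 + σ / (a * y + z)))
      (a / (a * x + z + σ) - a / (a * x + z)) x := by
  have hden : HasDerivAt (fun y => a * y + z) a x := by
    simpa using ((hasDerivAt_id x).const_mul a).add_const z
  convert (((hasDerivAt_const x σ).fun_div hden hL.ne').const_add 1).log (by positivity) using 1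
  have : a * x + z + σ ≠ 0 := by positivity
  field_simp
  ring

theorem log_div_affine_tangent_le {σ a z x y : ℝ} (hσ : 0 < σ) (hx : 0 < a * x + z)
    (hy : 0 < a * y + z) :
    log (σ / (a * x + z)) + -a / (a * x + z) * (y - x) ≤ log (σ / (a * y + z)) := by
  have h := log_le_sub_one_of_pos (div_pos hy hx)
  rw [log_div hy.ne' hx.ne'] at h
  have hfrac : (a * y + z) / (a * x + z) - 1 = a * (y - x) / (a * x + z) := by
    field_simp
    ring
  rw [log_div hσ.ne' hx.ne', log_div hσ.ne' hy.ne', neg_div, neg_mul, ← mul_div_right_comm]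
  linarith

/-! One interfering user `m`: `w = w_m`, `a = a_m`, `σ = s̃_m`, `z = z_m`, `x = x̃_m`,
`α = α_m`, `c = c_m`, and `st = s̃`. -/
section User

variable {w a σ z st x α c : ℝ}

theorem user_gap_nonpos (hσ : 0 < σ) (hst : 0 < a * st + z) (hw : 0 ≤ w)
    (hx : x = σ / (a * st + z)) (hα : α = x / (1 + x))
    (hc : c = w * (log (1 + x) - α * log x)) {s : ℝ} (hs : 0 < a * s + z) :
    w * α * log (σ / (a * s + z)) + c - w * log (1 + σ / (a * s + z)) ≤ 0 := by
  have key := mul_log_add_le_log_one_add (div_pos hσ hs) (hx ▸ div_pos hσ hst)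
  rw [← hα] at key
  rw [hc]
  nlinarith

theorem user_gap_at_self (hx : x = σ / (a * st + z))
    (hc : c = w * (log (1 + x) - α * log x)) :
    w * α * log (σ / (a * st + z)) + c - w * log (1 + σ / (a * st + z)) = 0 := by
  rw [← hx, hc]
  ring

theorem hasDerivAt_user_gap (hσ : 0 < σ) (hst : 0 < a * st + z)
    (hx : x = σ / (a * st + z)) (hα : α = x / (1 + x)) :
    HasDerivAt (fun y => w * α * log (σ / (a * y + z)) + c - w * log (1 + σ / (a * y + z)))
      0 st := by
  have hd := (((hasDerivAt_log_div_affine hσ.ne' hst.ne').const_mul (w * α)).add_const c).sub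
    ((hasDerivAt_log_one_add_div_affine hσ hst).const_mul w)
  refine hd.congr_deriv ?_
  have : a * st + z + σ ≠ 0 := by positivity
  rw [hα, hx]
  field_simp
  ring

theorem user_lowerBound_tangent_le (hσ : 0 < σ) (hst : 0 < a * st + z) (hw : 0 ≤ w)
    (hx : x = σ / (a * st + z)) (hα : α = x / (1 + x)) {s : ℝ} (hs : 0 < a * s + z) :
    w * α * log (σ / (a * st + z)) + c + w * α * (-a / (a * st + z)) * (s - st) ≤
      w * α * log (σ / (a * s + z)) + c := by
  have hwα : 0 ≤ w * α := mul_nonneg hw (by rw [hα, hx]; positivity)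
  nlinarith [mul_le_mul_of_nonneg_left (log_div_affine_tangent_le hσ hst hs) hwα]

end User

theorem IASB10_tighter_than_IASB5_general
    {ι : Type*} (I : Finset ι)
    (M st w intn : ℝ) (wI aI sI zI : ι → ℝ)
    (hst : st ∈ Set.Icc 0 M)
    (hwI : ∀ m ∈ I, 0 < wI m) (haI : ∀ m ∈ I, 0 ≤ aI m)
    (hsI : ∀ m ∈ I, 0 < sI m) (hzI : ∀ m ∈ I, 0 < zI m)
    (q t : ι) (hq : q ∈ I) (ht : t ∈ I) (hqt : q ≠ t)
    (xI αI cI : ι → ℝ)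
    (hxI : ∀ m ∈ I, xI m = sI m / (aI m * st + zI m))
    (hαI : ∀ m ∈ I, αI m = xI m / (1 + xI m))
    (hcI : ∀ m ∈ I, cI m = wI m * (Real.log (1 + xI m) - αI m * Real.log (xI m)))
    (f f1IASB5 f1IASB10 fIASB5 fIASB10 : ℝ → ℝ)
    (hf : f = fun s => -w * Real.log (1 + s / intn)
        - ∑ m ∈ I, wI m * Real.log (1 + sI m / (aI m * s + zI m)))
    (hf1IASB5 : f1IASB5 = fun s => -w * Real.log (1 + s / intn)
        - (wI q * αI q * Real.log (sI q / (aI q * s + zI q)) + cI q)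
        - (wI t * αI t * Real.log (sI t / (aI t * s + zI t)) + cI t))
    (hf1IASB10 : f1IASB10 = fun s => -w * Real.log (1 + s / intn)
        - ∑ m ∈ I, (wI m * αI m * Real.log (sI m / (aI m * s + zI m)) + cI m))
    (hfIASB5 : fIASB5 = fun s => f1IASB5 s + (f st - f1IASB5 st)
        + deriv (fun x => f x - f1IASB5 x) st * (s - st))
    (hfIASB10 : fIASB10 = fun s => f1IASB10 s + (f st - f1IASB10 st)
        + deriv (fun x => f x - f1IASB10 x) st * (s - st)) :
    ∀ s ∈ Set.Icc 0 M, f s ≤ fIASB10 s ∧ fIASB10 s ≤ fIASB5 s := by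
  classical
  intro s hs
  have hL : ∀ m ∈ I, ∀ y, 0 ≤ y → 0 < aI m * y + zI m := fun m hm y hy =>
    add_pos_of_nonneg_of_pos (mul_nonneg (haI m hm) hy) (hzI m hm)
  have hgap : ∀ y, f y - f1IASB10 y = ∑ m ∈ I,
      (wI m * αI m * log (sI m / (aI m * y + zI m)) + cI m
        - wI m * log (1 + sI m / (aI m * y + zI m))) := fun y => by
    simp only [hf, hf1IASB10, sum_sub_distrib]
    ring
  have hextra : ∀ y, f1IASB5 y - f1IASB10 y = ∑ m ∈ (I.erase q).erase t,
      (wI m * αI m * log (sI m / (aI m * y + zI m)) + cI m) := fun y => by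
    simp only [hf1IASB5, hf1IASB10]
    rw [← add_sum_erase _ _ hq, ← add_sum_erase _ _ (mem_erase.2 ⟨hqt.symm, ht⟩)]
    ring
  have hJ : ∀ m ∈ (I.erase q).erase t, m ∈ I := fun m hm =>
    mem_of_mem_erase (mem_of_mem_erase hm)
  have hD10 : HasDerivAt (fun y => f y - f1IASB10 y) 0 st := by
    simp only [hgap]
    simpa using HasDerivAt.fun_sum fun m hm =>
      hasDerivAt_user_gap (w := wI m) (c := cI m) (hsI m hm) (hL m hm st hst.1) (hxI m hm)
        (hαI m hm)
  have hE := HasDerivAt.fun_sum fun m hm =>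
    (((hasDerivAt_log_div_affine (hsI m (hJ m hm)).ne' (hL m (hJ m hm) st hst.1).ne').const_mul
      (wI m * αI m)).add_const (cI m))
  simp only [← hextra] at hE
  have hfIASB5' : fIASB5 = approx f f1IASB5 st := hfIASB5
  have hfIASB10' : fIASB10 = approx f f1IASB10 st := hfIASB10
  rw [hfIASB5', hfIASB10']
  refine ⟨le_approx hD10 ?_, approx_le_approx hD10 hE ?_⟩
  · rw [hgap, hgap, sum_eq_zero fun m hm => user_gap_at_self (hxI m hm) (hcI m hm)]
    simpa using sum_nonpos fun m hm => user_gap_nonpos (hsI m hm) (hL m hm st hst.1) (hwI m hm).le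
      (hxI m hm) (hαI m hm) (hcI m hm) (hL m hm s hs.1)
  · rw [hextra, hextra, sum_mul, ← sum_add_distrib]
    exact sum_le_sum fun m hm => user_lowerBound_tangent_le (hsI m (hJ m hm))
      (hL m (hJ m hm) st hst.1) (hwI m (hJ m hm)).le (hxI m (hJ m hm)) (hαI m (hJ m hm))
      (hL m (hJ m hm) s hs.1)

/-- Lemma 7, first part (IASB10 is tighter than IASB5): in the per-user per-tone
spectrum optimization setup, with two distinct reference users `q, t ∈ I`, the
approximations satisfy `f ≤ f^IASB10 ≤ f^IASB5` on `[0, M]`.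
Here `f^X = f1_X + LIN(f − f1_X)` with `LIN` the linearization at `s̃`. -/
theorem IASB10_tighter_than_IASB5
    {ι : Type*} (I : Finset ι)
    (M st w intn : ℝ) (wI aI sI zI : ι → ℝ)
    (hM : 0 < M) (hst : st ∈ Set.Icc 0 M)
    (hw : 0 < w) (hintn : 0 < intn)
    (hwI : ∀ m ∈ I, 0 < wI m) (haI : ∀ m ∈ I, 0 ≤ aI m)
    (hsI : ∀ m ∈ I, 0 < sI m) (hzI : ∀ m ∈ I, 0 < zI m)
    (q t : ι) (hq : q ∈ I) (ht : t ∈ I) (hqt : q ≠ t)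
    (xI αI cI : ι → ℝ)
    (hxI : ∀ m ∈ I, xI m = sI m / (aI m * st + zI m))
    (hαI : ∀ m ∈ I, αI m = xI m / (1 + xI m))
    (hcI : ∀ m ∈ I, cI m = wI m * (Real.log (1 + xI m) - αI m * Real.log (xI m)))
    (f f1IASB5 f1IASB10 fIASB5 fIASB10 : ℝ → ℝ)
    (hf : f = fun s => -w * Real.log (1 + s / intn)
        - ∑ m ∈ I, wI m * Real.log (1 + sI m / (aI m * s + zI m)))
    (hf1IASB5 : f1IASB5 = fun s => -w * Real.log (1 + s / intn)
        - (wI q * αI q * Real.log (sI q / (aI q * s + zI q)) + cI q)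
        - (wI t * αI t * Real.log (sI t / (aI t * s + zI t)) + cI t))
    (hf1IASB10 : f1IASB10 = fun s => -w * Real.log (1 + s / intn)
        - ∑ m ∈ I, (wI m * αI m * Real.log (sI m / (aI m * s + zI m)) + cI m))
    (hfIASB5 : fIASB5 = fun s => f1IASB5 s + (f st - f1IASB5 st)
        + deriv (fun x => f x - f1IASB5 x) st * (s - st))
    (hfIASB10 : fIASB10 = fun s => f1IASB10 s + (f st - f1IASB10 st)
        + deriv (fun x => f x - f1IASB10 x) st * (s - st)) :
    ∀ s ∈ Set.Icc 0 M, f s ≤ fIASB10 s ∧ fIASB10 s ≤ fIASB5 s :=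
  IASB10_tighter_than_IASB5_general I M st w intn wI aI sI zI hst hwI haI hsI hzI q t hq ht hqt xI
    αI cI hxI hαI hcI f f1IASB5 f1IASB10 fIASB5 fIASB10 hf hf1IASB5 hf1IASB10 hfIASB5 hfIASB10
end

section
/- IASB6 tightness (improvement over IASB1 for any β ≥ 0): In the per-user per-tone spectrum optimization setup, let β ≥ 0 and define f2_IASB6(s) = −β·w·log(1 + s/int) − Σ_{m∈I} w_m·log(1 + s̃_m/int_m(s)). If f2_IASB6 is upper bounded on [0, M] by its tangent line at s̃, then for all s ∈ [0, M]: f(s) ≤ f^IASB6(s) ≤ f^IASB1(s). -/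
/-! `f` splits as `f1_IASB6 + f2_IASB6`, so the first inequality is the tangent-line hypothesis on
`f2_IASB6`. For the second, `f - f1_IASB1 = f2_IASB6 + β w log (1 + s / int)`, and linearization is
additive, so `f^IASB1 - f^IASB6` is `β w` times the gap between `log (1 + s / int)` and its tangent
line at `s̃`, which is nonnegative by concavity of the logarithm. -/

open Real

noncomputable def linearization (g : ℝ → ℝ) (x₀ x : ℝ) : ℝ := g x₀ + deriv g x₀ * (x - x₀)

lemma linearization_add {g h : ℝ → ℝ} {x₀ : ℝ} (hg : DifferentiableAt ℝ g x₀)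
    (hh : DifferentiableAt ℝ h x₀) (x : ℝ) :
    linearization (fun y => g y + h y) x₀ x = linearization g x₀ x + linearization h x₀ x := by
  rw [linearization, linearization, linearization, deriv_fun_add hg hh]
  ring

lemma linearization_const_mul (c : ℝ) (g : ℝ → ℝ) (x₀ x : ℝ) :
    linearization (fun y => c * g y) x₀ x = c * linearization g x₀ x := by
  simp only [linearization, deriv_const_mul_field']
  ring

lemma Real.log_le_log_add_sub_div {a b : ℝ} (ha : 0 < a) (hb : 0 < b) :
    log b ≤ log a + (b - a) / a := by
  have h := log_le_sub_one_of_pos (div_pos hb ha)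
  rw [log_div hb.ne' ha.ne', div_sub_one ha.ne'] at h
  linarith

lemma one_add_div_pos {c x : ℝ} (hc : 0 < c) (hx : 0 < c + x) : 0 < 1 + x / c := by
  rw [one_add_div hc.ne']
  positivity

lemma hasDerivAt_log_one_add_div {c x : ℝ} (hc : 0 < c) (hx : 0 < c + x) :
    HasDerivAt (fun y => log (1 + y / c)) (1 / (c + x)) x := by
  convert ((hasDerivAt_id' x).div_const c |>.const_add 1).log (one_add_div_pos hc hx).ne' using 1
  field_simp

lemma log_one_add_div_le_linearization {c x₀ x : ℝ} (hc : 0 < c) (hx₀ : 0 < c + x₀)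
    (hx : 0 < c + x) :
    log (1 + x / c) ≤ linearization (fun y => log (1 + y / c)) x₀ x := by
  have key := log_le_log_add_sub_div (one_add_div_pos hc hx₀) (one_add_div_pos hc hx)
  rw [linearization, (hasDerivAt_log_one_add_div hc hx₀).deriv]
  convert key using 2
  field_simp
  ring

lemma differentiableAt_sum_mul_log_one_add_div {ι : Type*} (I : Finset ι) (w a p z : ι → ℝ)
    {x : ℝ} (hp : ∀ m ∈ I, 0 ≤ p m) (hden : ∀ m ∈ I, 0 < a m * x + z m) :
    DifferentiableAt ℝ (fun y => ∑ m ∈ I, w m * log (1 + p m / (a m * y + z m))) x := by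
  refine DifferentiableAt.fun_sum fun m hm => DifferentiableAt.const_mul ?_ _
  have hden_m := hden m hm
  have hp_m := hp m hm
  refine DifferentiableAt.log ?_ (by positivity)
  exact (differentiableAt_const _).add
    ((differentiableAt_const _).div (by fun_prop) hden_m.ne')

theorem IASB6_tighter_than_IASB1_general
    {ι : Type*} (I : Finset ι)
    (M st w intn : ℝ) (wI aI sI zI : ι → ℝ)
    (hst : st ∈ Set.Icc 0 M)
    (hw : 0 < w) (hintn : 0 < intn)
    (haI : ∀ m ∈ I, 0 ≤ aI m)
    (hsI : ∀ m ∈ I, 0 < sI m) (hzI : ∀ m ∈ I, 0 < zI m)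
    (β : ℝ) (hβ : 0 ≤ β)
    (f f1IASB1 f1IASB6 f2IASB6 fIASB1 fIASB6 : ℝ → ℝ)
    (hf : f = fun s => -w * Real.log (1 + s / intn)
        - ∑ m ∈ I, wI m * Real.log (1 + sI m / (aI m * s + zI m)))
    (hf1IASB1 : f1IASB1 = fun s => -w * Real.log (1 + s / intn))
    (hf1IASB6 : f1IASB6 = fun s => -w * (1 - β) * Real.log (1 + s / intn))
    (hf2IASB6 : f2IASB6 = fun s => -β * w * Real.log (1 + s / intn)
        - ∑ m ∈ I, wI m * Real.log (1 + sI m / (aI m * s + zI m)))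
    (htan : ∀ s ∈ Set.Icc 0 M,
        f2IASB6 s ≤ f2IASB6 st + deriv f2IASB6 st * (s - st))
    (hfIASB1 : fIASB1 = fun s => f1IASB1 s + (f st - f1IASB1 st)
        + deriv (fun x => f x - f1IASB1 x) st * (s - st))
    (hfIASB6 : fIASB6 = fun s => f1IASB6 s + f2IASB6 st
        + deriv f2IASB6 st * (s - st)) :
    ∀ s ∈ Set.Icc 0 M, f s ≤ fIASB6 s ∧ fIASB6 s ≤ fIASB1 s := by
  intro s hs
  set L : ℝ → ℝ := fun x => log (1 + x / intn) with hL
  have hL_diff : DifferentiableAt ℝ L st :=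
    (hasDerivAt_log_one_add_div hintn (by linarith [hst.1])).differentiableAt
  have hL_le : L s ≤ linearization L st s :=
    log_one_add_div_le_linearization hintn (by linarith [hst.1]) (by linarith [hs.1])
  have hf2_diff : DifferentiableAt ℝ f2IASB6 st := by
    rw [hf2IASB6]
    exact (hL_diff.const_mul _).sub (differentiableAt_sum_mul_log_one_add_div I wI aI sI zI
      (fun m hm => (hsI m hm).le)
      fun m hm => add_pos_of_nonneg_of_pos (mul_nonneg (haI m hm) hst.1) (hzI m hm))
  have hf_eq : f s = f1IASB6 s + f2IASB6 s := by
    simp only [hf, hf1IASB6, hf2IASB6]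
    ring
  have hf_sub_eq : (fun x => f x - f1IASB1 x) = fun x => f2IASB6 x + β * w * L x := by
    funext x
    simp only [hf, hf1IASB1, hf2IASB6, hL]
    ring
  have hfIASB6_eq : fIASB6 s = f1IASB1 s + β * w * L s + linearization f2IASB6 st s := by
    simp only [hfIASB6, hf1IASB6, hf1IASB1, linearization, hL]
    ring
  have hfIASB1_eq : fIASB1 s = f1IASB1 s + linearization f2IASB6 st s
      + β * w * linearization L st s := by
    rw [add_assoc, ← linearization_const_mul,
      ← linearization_add hf2_diff (hL_diff.const_mul _), ← hf_sub_eq]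
    simp only [hfIASB1, linearization]
    ring
  constructor
  · rw [hf_eq, hfIASB6]
    linarith [htan s hs]
  · rw [hfIASB6_eq, hfIASB1_eq]
    linarith [mul_le_mul_of_nonneg_left hL_le (by positivity : 0 ≤ β * w)]

/-- IASB6 tightness (improvement over IASB1 for any `β ≥ 0`): in the per-user
per-tone spectrum optimization setup, let `β ≥ 0` and
`f2_IASB6(s) = −β·w·log(1 + s/int) − Σ_{m∈I} w_m·log(1 + s̃_m/int_m(s))`.
If `f2_IASB6` is upper bounded on `[0, M]` by its tangent line at `s̃`, then
`f ≤ f^IASB6 ≤ f^IASB1` on `[0, M]`. Here `f1_IASB6(s) = −w·(1 − β)·log(1 + s/int)`,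
`f^IASB6 = f1_IASB6 + LIN(f2_IASB6)` and `f^IASB1 = f1_IASB1 + LIN(f − f1_IASB1)`
with `LIN` the linearization at `s̃`. -/
theorem IASB6_tighter_than_IASB1
    {ι : Type*} (I : Finset ι)
    (M st w intn : ℝ) (wI aI sI zI : ι → ℝ)
    (hM : 0 < M) (hst : st ∈ Set.Icc 0 M)
    (hw : 0 < w) (hintn : 0 < intn)
    (hwI : ∀ m ∈ I, 0 < wI m) (haI : ∀ m ∈ I, 0 ≤ aI m)
    (hsI : ∀ m ∈ I, 0 < sI m) (hzI : ∀ m ∈ I, 0 < zI m)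
    (β : ℝ) (hβ : 0 ≤ β)
    (f f1IASB1 f1IASB6 f2IASB6 fIASB1 fIASB6 : ℝ → ℝ)
    (hf : f = fun s => -w * Real.log (1 + s / intn)
        - ∑ m ∈ I, wI m * Real.log (1 + sI m / (aI m * s + zI m)))
    (hf1IASB1 : f1IASB1 = fun s => -w * Real.log (1 + s / intn))
    (hf1IASB6 : f1IASB6 = fun s => -w * (1 - β) * Real.log (1 + s / intn))
    (hf2IASB6 : f2IASB6 = fun s => -β * w * Real.log (1 + s / intn)
        - ∑ m ∈ I, wI m * Real.log (1 + sI m / (aI m * s + zI m)))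
    (htan : ∀ s ∈ Set.Icc 0 M,
        f2IASB6 s ≤ f2IASB6 st + deriv f2IASB6 st * (s - st))
    (hfIASB1 : fIASB1 = fun s => f1IASB1 s + (f st - f1IASB1 st)
        + deriv (fun x => f x - f1IASB1 x) st * (s - st))
    (hfIASB6 : fIASB6 = fun s => f1IASB6 s + f2IASB6 st
        + deriv f2IASB6 st * (s - st)) :
    ∀ s ∈ Set.Icc 0 M, f s ≤ fIASB6 s ∧ fIASB6 s ≤ fIASB1 s :=
  IASB6_tighter_than_IASB1_general I M st w intn wI aI sI zI hst hw hintn haI hsI hzI β hβ f f1IASB1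
    f1IASB6 f2IASB6 fIASB1 fIASB6 hf hf1IASB1 hf1IASB6 hf2IASB6 htan hfIASB1 hfIASB6
end
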